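/- arXiv:0810.2799 — 3 statements merged into one kernel-verified Lean document; each statement's English description precedes it below -/
import Mathlib

section
/- For every unit vector e ∈ ℝ⁶, the matrix A = −J₀ + 2((J₀e)eᵀ − e(J₀e)ᵀ) (the 2-form −ω₀ + 2 e∧J₀e) lies in the SO(6)-conjugation orbit of J₀, its moment map image is μ(A) = (−1+2(e₁²+e₂²), −1+2(e₃²+e₄²), −1+2(e₅²+e₆²)), and in particular the coordinates of μ(A) satisfy x + y + z = −1, so μ(A) lies on a face of the tetrahedron μ(SO(6)·J₀). -/
open Matrix

noncomputable section

/-- The skew-symmetric matrix of the 2-form `eⁱ ∧ eʲ`. -/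
def E (i j : Fin 6) : Matrix (Fin 6) (Fin 6) ℝ := fun k l =>
  (if k = j ∧ l = i then (1 : ℝ) else 0) - (if k = i ∧ l = j then (1 : ℝ) else 0)

/-- The standard orthogonal complex structure `J₀ = E₁₂ + E₃₄ + E₅₆`. -/
def J₀ : Matrix (Fin 6) (Fin 6) ℝ := E 0 1 + E 2 3 + E 4 5

/-- The toric moment map `μ(A) = (⟨Ae₁,e₂⟩, ⟨Ae₃,e₄⟩, ⟨Ae₅,e₆⟩)`. -/
def μ (A : Matrix (Fin 6) (Fin 6) ℝ) : ℝ × ℝ × ℝ := (A 1 0, A 3 2, A 5 4)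

/-!
For a unit vector `e`, `R = 2eeᵀ - 1` (the reflection in the line `ℝe`) is symmetric and
involutive with determinant `-1`. Since `J₀` is skew, `eᵀJ₀e = 0`, and expanding gives
`R J₀ R = J₀ - 2 e ∧ J₀e`. The sign matrix `S = diag(1,-1,1,-1,1,-1)` is orthogonal with
determinant `-1` and conjugates `J₀` to `-J₀`, so `P = RS ∈ SO(6)` carries `J₀` to
`-J₀ + 2 e ∧ J₀e`. The moment map is read off entrywise, and its coordinates sum to
`-3 + 2|e|² = -1`.
-/

lemma dotProduct_mulVec_self_eq_zero {n K : Type*} [Fintype n] [Field K] [CharZero K]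
    {J : Matrix n n K} (hJ : Jᵀ = -J) (e : n → K) : e ⬝ᵥ (J *ᵥ e) = 0 := by
  rw [← CharZero.eq_neg_self_iff]
  calc e ⬝ᵥ (J *ᵥ e) = (Jᵀ *ᵥ e) ⬝ᵥ e := by rw [dotProduct_mulVec, mulVec_transpose]
    _ = -(e ⬝ᵥ (J *ᵥ e)) := by rw [hJ, neg_mulVec, neg_dotProduct, dotProduct_comm]

section LineReflection

variable {n K : Type*} [DecidableEq n] [Field K]

def lineReflection (e : n → K) : Matrix n n K := (2 : K) • vecMulVec e e - 1

variable (e : n → K)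

lemma lineReflection_transpose : (lineReflection e)ᵀ = lineReflection e := by
  simp [lineReflection, transpose_vecMulVec]

variable [Fintype n]

lemma lineReflection_mul_self (he : e ⬝ᵥ e = 1) :
    lineReflection e * lineReflection e = 1 := by
  have hMM : vecMulVec e e * vecMulVec e e = vecMulVec e e := by
    rw [vecMulVec_mul_vecMulVec, he, one_smul]
  simp only [lineReflection, sub_mul, mul_sub, smul_mul_assoc, mul_smul_comm, one_mul, mul_one,
    hMM]
  module

lemma det_lineReflection (he : e ⬝ᵥ e = 1) :
    (lineReflection e).det = -(-1) ^ Fintype.card n := by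
  have : lineReflection e = -(1 + replicateCol Unit ((-2 : K) • e) * replicateRow Unit e) := by
    rw [← vecMulVec_eq, smul_vecMulVec, lineReflection]
    module
  rw [this, det_neg, det_one_add_replicateCol_mul_replicateRow, dotProduct_smul, he]
  norm_num

lemma lineReflection_mul_mul_lineReflection [CharZero K] {J : Matrix n n K} (hJ : Jᵀ = -J) :
    lineReflection e * J * lineReflection e =
      J - (2 : K) • (vecMulVec (J *ᵥ e) e - vecMulVec e (J *ᵥ e)) := by
  have hMJ : vecMulVec e e * J = -vecMulVec e (J *ᵥ e) := by
    rw [vecMulVec_mul, ← vecMulVec_neg, ← neg_mulVec, ← hJ, mulVec_transpose]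
  have hJM : J * vecMulVec e e = vecMulVec (J *ᵥ e) e := mul_vecMulVec _ _ _
  have hMJM : vecMulVec e (J *ᵥ e) * vecMulVec e e = 0 := by
    rw [vecMulVec_mul_vecMulVec, dotProduct_comm, dotProduct_mulVec_self_eq_zero hJ e,
      zero_smul, vecMulVec_zero]
  simp only [lineReflection, sub_mul, mul_sub, smul_mul_assoc, mul_smul_comm, one_mul, mul_one,
    hJM, hMJ, Matrix.neg_mul, hMJM, smul_neg, smul_zero, neg_zero]
  module

lemma lineReflection_mul_orthogonal_and_conj [CharZero K] (he : e ⬝ᵥ e = 1)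
    {J S : Matrix n n K} (hJ : Jᵀ = -J) (hS : S * Sᵀ = 1) (hSJ : S * J * Sᵀ = -J) :
    lineReflection e * S * (lineReflection e * S)ᵀ = 1 ∧
      -J + (2 : K) • (vecMulVec (J *ᵥ e) e - vecMulVec e (J *ᵥ e)) =
        lineReflection e * S * J * (lineReflection e * S)ᵀ := by
  refine ⟨?_, ?_⟩
  · rw [transpose_mul, Matrix.mul_assoc, ← Matrix.mul_assoc S, hS, Matrix.one_mul,
      lineReflection_transpose, lineReflection_mul_self e he]
  · calc -J + (2 : K) • (vecMulVec (J *ᵥ e) e - vecMulVec e (J *ᵥ e))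
        = lineReflection e * (-J) * lineReflection e := by
          rw [Matrix.mul_neg, Matrix.neg_mul, lineReflection_mul_mul_lineReflection e hJ]; abel
      _ = lineReflection e * S * J * (lineReflection e * S)ᵀ := by
          rw [← hSJ, transpose_mul, lineReflection_transpose]; simp only [Matrix.mul_assoc]

end LineReflection

lemma E_transpose (i j : Fin 6) : (E i j)ᵀ = -E i j := by
  ext k l
  simp only [transpose_apply, Matrix.neg_apply, E, neg_sub, and_comm]

lemma J₀_transpose : J₀ᵀ = -J₀ := by
  simp only [J₀, transpose_add, E_transpose, neg_add]

lemma diagonal_mul_E_mul_diagonal (d : Fin 6 → ℝ) (i j : Fin 6) :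
    diagonal d * E i j * diagonal d = (d i * d j) • E i j := by
  ext k l
  simp only [diagonal_mul, mul_diagonal, Matrix.smul_apply, E, smul_eq_mul]
  split_ifs <;> grind

def alternatingSigns : Matrix (Fin 6) (Fin 6) ℝ := diagonal ![1, -1, 1, -1, 1, -1]

lemma alternatingSigns_mul_transpose : alternatingSigns * alternatingSignsᵀ = 1 := by
  rw [alternatingSigns, diagonal_transpose, diagonal_mul_diagonal, ← diagonal_one]
  congr 1
  ext i
  fin_cases i <;> simp

lemma det_alternatingSigns : alternatingSigns.det = -1 := by
  simp [alternatingSigns, det_diagonal, Fin.prod_univ_six]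

lemma alternatingSigns_mul_J₀_mul_transpose :
    alternatingSigns * J₀ * alternatingSignsᵀ = -J₀ := by
  simp only [alternatingSigns, diagonal_transpose, J₀, mul_add, add_mul,
    diagonal_mul_E_mul_diagonal]
  simp only [Fin.isValue, cons_val_zero, cons_val_one, cons_val, mul_neg, mul_one, neg_smul,
    one_smul, neg_add_rev]
  abel

lemma J₀_mulVec (e : Fin 6 → ℝ) : J₀ *ᵥ e = ![-e 1, e 0, -e 3, e 2, -e 5, e 4] := by
  ext i
  fin_cases i <;> simp [J₀, E, mulVec, dotProduct]

lemma μ_neg_J₀_add_two_smul (e : Fin 6 → ℝ) :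
    μ (-J₀ + (2 : ℝ) • (vecMulVec (J₀ *ᵥ e) e - vecMulVec e (J₀ *ᵥ e))) =
      (-1 + 2 * (e 0 ^ 2 + e 1 ^ 2), -1 + 2 * (e 2 ^ 2 + e 3 ^ 2),
        -1 + 2 * (e 4 ^ 2 + e 5 ^ 2)) := by
  simp only [μ, J₀_mulVec, Matrix.add_apply, Matrix.neg_apply, Matrix.smul_apply,
    Matrix.sub_apply, vecMulVec_apply]
  refine Prod.ext ?_ (Prod.ext ?_ ?_) <;> simp [J₀, E] <;> ring

/-- For a unit vector `e`, the 2-form `−ω₀ + 2 e ∧ J₀e` lies in the `SO(6)`-orbit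
of `J₀`, its moment image is `(−1+2(e₁²+e₂²), −1+2(e₃²+e₄²), −1+2(e₅²+e₆²))`,
whose coordinates sum to `−1`, a face of the moment tetrahedron. -/
theorem face_of_tetrahedron (e : Fin 6 → ℝ) (he : e ⬝ᵥ e = 1) :
    (∃ P : Matrix (Fin 6) (Fin 6) ℝ, P * Pᵀ = 1 ∧ P.det = 1 ∧
        -J₀ + (2 : ℝ) • (vecMulVec (J₀ *ᵥ e) e - vecMulVec e (J₀ *ᵥ e)) = P * J₀ * Pᵀ) ∧
    μ (-J₀ + (2 : ℝ) • (vecMulVec (J₀ *ᵥ e) e - vecMulVec e (J₀ *ᵥ e))) =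
      (-1 + 2 * (e 0 ^ 2 + e 1 ^ 2), -1 + 2 * (e 2 ^ 2 + e 3 ^ 2),
        -1 + 2 * (e 4 ^ 2 + e 5 ^ 2)) ∧
    (μ (-J₀ + (2 : ℝ) • (vecMulVec (J₀ *ᵥ e) e - vecMulVec e (J₀ *ᵥ e)))).1 +
      (μ (-J₀ + (2 : ℝ) • (vecMulVec (J₀ *ᵥ e) e - vecMulVec e (J₀ *ᵥ e)))).2.1 +
      (μ (-J₀ + (2 : ℝ) • (vecMulVec (J₀ *ᵥ e) e - vecMulVec e (J₀ *ᵥ e)))).2.2 = -1 := by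
  have hsum : e 0 ^ 2 + e 1 ^ 2 + e 2 ^ 2 + e 3 ^ 2 + e 4 ^ 2 + e 5 ^ 2 = 1 := by
    simpa [dotProduct, Fin.sum_univ_six, sq] using he
  obtain ⟨hP, hconj⟩ := lineReflection_mul_orthogonal_and_conj e he J₀_transpose
    alternatingSigns_mul_transpose alternatingSigns_mul_J₀_mul_transpose
  have hdet : (lineReflection e * alternatingSigns).det = 1 := by
    rw [det_mul, det_lineReflection e he, det_alternatingSigns]; norm_num
  refine ⟨⟨_, hP, hdet, hconj⟩, μ_neg_J₀_add_two_smul e, ?_⟩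
  rw [μ_neg_J₀_add_two_smul]
  linear_combination 2 * hsum
end
end

section
/- Let a, b be orthonormal vectors in ℝ⁶ and set x = a₁b₂ − a₂b₁, y = a₃b₄ − a₄b₃, z = a₅b₆ − a₆b₅ (the moment map image of the simple unit 2-form a∧b). Then |x| + |y| + |z| ≤ 1, and equality holds if and only if b = Ja for some J = ε₁E₁₂ + ε₂E₃₄ + ε₃E₅₆ with ε₁, ε₂, ε₃ ∈ {−1, 1}, i.e. if and only if b is obtained from a by one of the eight orthogonal almost complex structures ±e¹∧e² ± e³∧e⁴ ± e⁵∧e⁶. -/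
open Matrix

noncomputable section

lemma block_eq (p q r s : ℝ) (h : |p*s - q*r| = (p^2+q^2+r^2+s^2)/2) :
    ∃ ε : ℝ, (ε = 1 ∨ ε = -1) ∧ r = -(ε*q) ∧ s = ε*p := by
  rcases le_or_gt 0 (p*s - q*r) with hd | hd
  · rw [abs_of_nonneg hd] at h
    have h1 : (r+q)^2 = 0 := by nlinarith [sq_nonneg (s-p)]
    have h2 : (s-p)^2 = 0 := by nlinarith [sq_nonneg (r+q)]
    have h1' := sq_eq_zero_iff.mp h1
    have h2' := sq_eq_zero_iff.mp h2
    exact ⟨1, Or.inl rfl, by linarith, by linarith⟩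
  · rw [abs_of_neg hd] at h
    have h1 : (r-q)^2 = 0 := by nlinarith [sq_nonneg (s+p)]
    have h2 : (s+p)^2 = 0 := by nlinarith [sq_nonneg (r-q)]
    have h1' := sq_eq_zero_iff.mp h1
    have h2' := sq_eq_zero_iff.mp h2
    exact ⟨-1, Or.inr rfl, by linarith, by linarith⟩

set_option maxHeartbeats 2000000 in
/-- For orthonormal `a, b ∈ ℝ⁶` with moment coordinates
`x = a₁b₂ − a₂b₁`, `y = a₃b₄ − a₄b₃`, `z = a₅b₆ − a₆b₅`, one has
`|x| + |y| + |z| ≤ 1`, with equality iff `b = Ja` for one of the eight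
orthogonal complex structures `J = ±E₁₂ ± E₃₄ ± E₅₆`. -/
theorem octahedron_inequality (a b : Fin 6 → ℝ)
    (ha : a ⬝ᵥ a = 1) (hb : b ⬝ᵥ b = 1) (hab : a ⬝ᵥ b = 0) :
    |a 0 * b 1 - a 1 * b 0| + |a 2 * b 3 - a 3 * b 2| + |a 4 * b 5 - a 5 * b 4| ≤ 1 ∧
    (|a 0 * b 1 - a 1 * b 0| + |a 2 * b 3 - a 3 * b 2| + |a 4 * b 5 - a 5 * b 4| = 1 ↔
      ∃ ε₁ ε₂ ε₃ : ℝ, (ε₁ = 1 ∨ ε₁ = -1) ∧ (ε₂ = 1 ∨ ε₂ = -1) ∧ (ε₃ = 1 ∨ ε₃ = -1) ∧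
        b = (ε₁ • E 0 1 + ε₂ • E 2 3 + ε₃ • E 4 5) *ᵥ a) := by
  have ha' : a 0^2 + a 1^2 + a 2^2 + a 3^2 + a 4^2 + a 5^2 = 1 := by
    simp [dotProduct, Fin.sum_univ_six] at ha; nlinarith [ha]
  have hb' : b 0^2 + b 1^2 + b 2^2 + b 3^2 + b 4^2 + b 5^2 = 1 := by
    simp [dotProduct, Fin.sum_univ_six] at hb; nlinarith [hb]
  have hx : |a 0 * b 1 - a 1 * b 0| ≤ (a 0^2 + a 1^2 + b 0^2 + b 1^2)/2 := by
    rw [abs_le]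
    constructor
    · nlinarith [sq_nonneg (a 0 + b 1), sq_nonneg (a 1 - b 0)]
    · nlinarith [sq_nonneg (a 0 - b 1), sq_nonneg (a 1 + b 0)]
  have hy : |a 2 * b 3 - a 3 * b 2| ≤ (a 2^2 + a 3^2 + b 2^2 + b 3^2)/2 := by
    rw [abs_le]
    constructor
    · nlinarith [sq_nonneg (a 2 + b 3), sq_nonneg (a 3 - b 2)]
    · nlinarith [sq_nonneg (a 2 - b 3), sq_nonneg (a 3 + b 2)]
  have hz : |a 4 * b 5 - a 5 * b 4| ≤ (a 4^2 + a 5^2 + b 4^2 + b 5^2)/2 := by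
    rw [abs_le]
    constructor
    · nlinarith [sq_nonneg (a 4 + b 5), sq_nonneg (a 5 - b 4)]
    · nlinarith [sq_nonneg (a 4 - b 5), sq_nonneg (a 5 + b 4)]
  refine ⟨by linarith, ?_, ?_⟩
  · intro h
    have e1 : |a 0 * b 1 - a 1 * b 0| = (a 0^2 + a 1^2 + b 0^2 + b 1^2)/2 := by linarith
    have e2 : |a 2 * b 3 - a 3 * b 2| = (a 2^2 + a 3^2 + b 2^2 + b 3^2)/2 := by linarith
    have e3 : |a 4 * b 5 - a 5 * b 4| = (a 4^2 + a 5^2 + b 4^2 + b 5^2)/2 := by linarith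
    obtain ⟨ε₁, hε1, hr1, hs1⟩ := block_eq _ _ _ _ e1
    obtain ⟨ε₂, hε2, hr2, hs2⟩ := block_eq _ _ _ _ e2
    obtain ⟨ε₃, hε3, hr3, hs3⟩ := block_eq _ _ _ _ e3
    refine ⟨ε₁, ε₂, ε₃, hε1, hε2, hε3, ?_⟩
    funext k
    fin_cases k <;>
      simp (config := { decide := true }) [E, mulVec, dotProduct, Fin.sum_univ_six] <;>
      linarith [hr1, hs1, hr2, hs2, hr3, hs3]
  · rintro ⟨ε₁, ε₂, ε₃, hε1, hε2, hε3, rfl⟩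
    have c0 : ((ε₁ • E 0 1 + ε₂ • E 2 3 + ε₃ • E 4 5) *ᵥ a) 0 = -(ε₁ * a 1) := by
      simp (config := { decide := true }) [E, mulVec, dotProduct, Fin.sum_univ_six]
    have c1 : ((ε₁ • E 0 1 + ε₂ • E 2 3 + ε₃ • E 4 5) *ᵥ a) 1 = ε₁ * a 0 := by
      simp (config := { decide := true }) [E, mulVec, dotProduct, Fin.sum_univ_six]
    have c2 : ((ε₁ • E 0 1 + ε₂ • E 2 3 + ε₃ • E 4 5) *ᵥ a) 2 = -(ε₂ * a 3) := by
      simp (config := { decide := true }) [E, mulVec, dotProduct, Fin.sum_univ_six]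
    have c3 : ((ε₁ • E 0 1 + ε₂ • E 2 3 + ε₃ • E 4 5) *ᵥ a) 3 = ε₂ * a 2 := by
      simp (config := { decide := true }) [E, mulVec, dotProduct, Fin.sum_univ_six]
    have c4 : ((ε₁ • E 0 1 + ε₂ • E 2 3 + ε₃ • E 4 5) *ᵥ a) 4 = -(ε₃ * a 5) := by
      simp (config := { decide := true }) [E, mulVec, dotProduct, Fin.sum_univ_six]
    have c5 : ((ε₁ • E 0 1 + ε₂ • E 2 3 + ε₃ • E 4 5) *ᵥ a) 5 = ε₃ * a 4 := by
      simp (config := { decide := true }) [E, mulVec, dotProduct, Fin.sum_univ_six]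
    rw [c0, c1, c2, c3, c4, c5]
    have t1 : a 0 * (ε₁ * a 0) - a 1 * -(ε₁ * a 1) = ε₁ * (a 0^2 + a 1^2) := by ring
    have t2 : a 2 * (ε₂ * a 2) - a 3 * -(ε₂ * a 3) = ε₂ * (a 2^2 + a 3^2) := by ring
    have t3 : a 4 * (ε₃ * a 4) - a 5 * -(ε₃ * a 5) = ε₃ * (a 4^2 + a 5^2) := by ring
    rw [t1, t2, t3, abs_mul, abs_mul, abs_mul]
    have a1 : |ε₁| = 1 := by rcases hε1 with rfl | rfl <;> simp
    have a2 : |ε₂| = 1 := by rcases hε2 with rfl | rfl <;> simp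
    have a3 : |ε₃| = 1 := by rcases hε3 with rfl | rfl <;> simp
    rw [a1, a2, a3, one_mul, one_mul, one_mul,
      abs_of_nonneg (by positivity), abs_of_nonneg (by positivity),
      abs_of_nonneg (by positivity)]
    linarith
end
end

section
/- For every α > 0, the moment map image of the fibre of mixed structures over the standard complex structure J₀ is a triangular face of the truncated tetrahedron: {μ(J₀ + α((J₀f)fᵀ − f(J₀f)ᵀ)) : f ∈ ℝ⁶, ⟨f,f⟩ = 1} = convexHull{(1+α, 1, 1), (1, 1+α, 1), (1, 1, 1+α)}. -/
open Matrix

noncomputable section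

/-- The affine map sending `w` to `(1+α w₀, 1+α w₁, 1+α w₂)`. -/
def Tmap (α : ℝ) : (Fin 3 → ℝ) →ᵃ[ℝ] ℝ × ℝ × ℝ where
  toFun w := (1 + α * w 0, 1 + α * w 1, 1 + α * w 2)
  linear :=
    { toFun := fun w => (α * w 0, α * w 1, α * w 2)
      map_add' := by
        intro x y
        simp only [Pi.add_apply, Prod.mk_add_mk, Prod.mk.injEq]
        exact ⟨by ring, by ring, by ring⟩
      map_smul' := by
        intro c x
        simp only [Pi.smul_apply, smul_eq_mul, RingHom.id_apply, Prod.smul_mk, Prod.mk.injEq]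
        exact ⟨by ring, by ring, by ring⟩ }
  map_vadd' := by
    intro p v
    simp only [vadd_eq_add, Pi.add_apply, LinearMap.coe_mk, AddHom.coe_mk, Prod.mk_add_mk,
      Prod.mk.injEq]
    exact ⟨by ring, by ring, by ring⟩

set_option maxHeartbeats 1000000 in
/-- Explicit computation of the moment map of `J₀ + α f∧J₀f`. -/
lemma μ_key (α : ℝ) (f : Fin 6 → ℝ) :
    μ (J₀ + α • (vecMulVec (J₀ *ᵥ f) f - vecMulVec f (J₀ *ᵥ f))) =
      (1 + α * (f 0 ^ 2 + f 1 ^ 2), 1 + α * (f 2 ^ 2 + f 3 ^ 2),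
        1 + α * (f 4 ^ 2 + f 5 ^ 2)) := by
  simp (config := { decide := true }) only [μ, J₀, E, Matrix.add_apply, Matrix.smul_apply,
    Matrix.sub_apply, vecMulVec_apply, mulVec, dotProduct, Fin.sum_univ_six,
    Prod.mk.injEq, smul_eq_mul, if_true, if_false, and_true, and_false, true_and, false_and,
    and_self]
  norm_num
  refine ⟨?_, ?_, ?_⟩ <;> exact Or.inl (by ring)

/-- For `α > 0`, the moment image of the fibre of mixed structures over `J₀`
(the forms `ω₀ + α f∧J₀f` for unit `f`) is the triangular face of the truncated
tetrahedron with vertices `(1+α,1,1)`, `(1,1+α,1)`, `(1,1,1+α)`. -/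
theorem fibre_over_J₀_triangle (α : ℝ) (hα : 0 < α) :
    {p : ℝ × ℝ × ℝ | ∃ f : Fin 6 → ℝ, f ⬝ᵥ f = 1 ∧
        p = μ (J₀ + α • (vecMulVec (J₀ *ᵥ f) f - vecMulVec f (J₀ *ᵥ f)))} =
    convexHull ℝ {((1 + α, 1, 1) : ℝ × ℝ × ℝ), (1, 1 + α, 1), (1, 1, 1 + α)} := by
  have himg : Tmap α '' stdSimplex ℝ (Fin 3) =
      convexHull ℝ {((1 + α, 1, 1) : ℝ × ℝ × ℝ), (1, 1 + α, 1), (1, 1, 1 + α)} := by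
    rw [← convexHull_basis_eq_stdSimplex, AffineMap.image_convexHull]
    congr 1
    ext q
    constructor
    · rintro ⟨x, ⟨i, rfl⟩, rfl⟩
      fin_cases i
      · left; simp (config := { decide := true }) [Tmap]
      · right; left; simp (config := { decide := true }) [Tmap]
      · right; right; simp (config := { decide := true }) [Tmap]
    · rintro (rfl | rfl | rfl)
      · exact ⟨_, ⟨0, rfl⟩, by simp (config := { decide := true }) [Tmap]⟩
      · exact ⟨_, ⟨1, rfl⟩, by simp (config := { decide := true }) [Tmap]⟩
      · exact ⟨_, ⟨2, rfl⟩, by simp (config := { decide := true }) [Tmap]⟩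
  rw [← himg]
  ext p
  constructor
  · rintro ⟨f, hf, rfl⟩
    have hf' : f 0 * f 0 + f 1 * f 1 + f 2 * f 2 + f 3 * f 3 + f 4 * f 4 + f 5 * f 5 = 1 := by
      simpa [dotProduct, Fin.sum_univ_six] using hf
    refine ⟨![f 0 ^ 2 + f 1 ^ 2, f 2 ^ 2 + f 3 ^ 2, f 4 ^ 2 + f 5 ^ 2], ⟨?_, ?_⟩, ?_⟩
    · intro i
      fin_cases i
      · show (0:ℝ) ≤ f 0 ^ 2 + f 1 ^ 2; positivity
      · show (0:ℝ) ≤ f 2 ^ 2 + f 3 ^ 2; positivity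
      · show (0:ℝ) ≤ f 4 ^ 2 + f 5 ^ 2; positivity
    · rw [Fin.sum_univ_three]
      show f 0 ^ 2 + f 1 ^ 2 + (f 2 ^ 2 + f 3 ^ 2) + (f 4 ^ 2 + f 5 ^ 2) = 1
      nlinarith [hf']
    · rw [μ_key]
      rfl
  · rintro ⟨w, ⟨hw0, hw1⟩, rfl⟩
    refine ⟨![Real.sqrt (w 0), 0, Real.sqrt (w 1), 0, Real.sqrt (w 2), 0], ?_, ?_⟩
    · rw [dotProduct, Fin.sum_univ_six]
      show Real.sqrt (w 0) * Real.sqrt (w 0) + 0 * 0 + Real.sqrt (w 1) * Real.sqrt (w 1)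
          + 0 * 0 + Real.sqrt (w 2) * Real.sqrt (w 2) + 0 * 0 = 1
      rw [Real.mul_self_sqrt (hw0 0), Real.mul_self_sqrt (hw0 1), Real.mul_self_sqrt (hw0 2)]
      have := hw1
      rw [Fin.sum_univ_three] at this
      linarith
    · rw [μ_key]
      show Tmap α w = (1 + α * (Real.sqrt (w 0) ^ 2 + 0 ^ 2),
        1 + α * (Real.sqrt (w 1) ^ 2 + 0 ^ 2), 1 + α * (Real.sqrt (w 2) ^ 2 + 0 ^ 2))
      simp [Tmap, Prod.ext_iff, Real.sq_sqrt (hw0 _)]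
end
end
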